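/- Let a > 1 and let (k_m)_{m≥1} be any sequence of positive reals with k_m/m → a as m → ∞. Then for every τ ∈ (1/a, 1), liminf_{m→∞} [ ∫₀^τ J_m(k_m r)² r dr ] / [ ∫₀^1 J_m(k_m r)² r dr ] > 0; i.e. a Bessel mode whose wavenumber exceeds the turning point keeps a positive fraction of its L² mass in the interior disk of radius τ and is therefore not boundary-localized. -/

import Mathlib

open MeasureTheory Filter Set

/-- The Bessel function of the first kind of order `ν`:
`J_ν(x) = ∑ₖ (-1)^k / (k! Γ(ν+k+1)) (x/2)^(2k+ν)`. -/
noncomputable def besselJ (ν : ℝ) (x : ℝ) : ℝ :=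
  ∑' k : ℕ, ((-1 : ℝ) ^ k / ((k.factorial : ℝ) * Real.Gamma (ν + (k : ℝ) + 1))) *
    (x / 2) ^ (2 * (k : ℝ) + ν)

/-- The derivative `J_ν'` of the Bessel function. -/
noncomputable def besselJDeriv (ν : ℝ) (x : ℝ) : ℝ := deriv (besselJ ν) x

/-- `besselJZero ν s` is the `s`-th positive zero of `J_ν` (for `s ≥ 1`),
listed in increasing order. -/
noncomputable def besselJZero (ν : ℝ) : ℕ → ℝ
  | 0 => 0
  | s + 1 => sInf {x : ℝ | besselJZero ν s < x ∧ besselJ ν x = 0}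

/-- `besselJPrimeZero ν s` is the `s`-th positive zero of `J_ν'` (for `s ≥ 1`),
listed in increasing order. -/
noncomputable def besselJPrimeZero (ν : ℝ) : ℕ → ℝ
  | 0 => 0
  | s + 1 => sInf {x : ℝ | besselJPrimeZero ν s < x ∧ besselJDeriv ν x = 0}

open scoped Nat

/-!
Write `P(y) = y J_m'(y)`. Bessel's equation makes the energy `E(y) = P² + (y² - m²) J_m(y)²`
satisfy `E' = 2 y J_m²`, so `∫₀^x J_m(k r)² r dr = E(k x) / (2 k²)`. On `y > m` the quotient
`E(y) / (y² - m²)` has derivative `-2 y P² / (y² - m²)² ≤ 0`; hence as soon as `k τ > m` the mass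
ratio is at least `((k τ)² - m²) / (k² - m²)`, and this tends to `((a τ)² - 1) / (a² - 1) > 0`.
-/

def HasInfiniteRadius (b : ℕ → ℝ) : Prop :=
  ∀ r : ℝ, 0 ≤ r → Summable fun k => |b k| * r ^ k

noncomputable def twoStepSeries (m : ℕ) (b : ℕ → ℝ) (x : ℝ) : ℝ :=
  ∑' k, b k * x ^ (m + 2 * k)

/-- If `f = twoStepSeries m b`, then `x f'(x) = twoStepSeries m (eulerCoeff m b) x`. -/
def eulerCoeff (m : ℕ) (b : ℕ → ℝ) (k : ℕ) : ℝ := ((m : ℝ) + 2 * k) * b k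

namespace HasInfiniteRadius

variable {b : ℕ → ℝ}

theorem summable_mul_pow (hb : HasInfiniteRadius b) (x : ℝ) : Summable fun k => b k * x ^ k :=
  .of_norm <| (hb |x| (abs_nonneg x)).congr fun k => by simp

theorem eulerCoeff (hb : HasInfiniteRadius b) (m : ℕ) : HasInfiniteRadius (eulerCoeff m b) := by
  intro r hr
  refine .of_nonneg_of_le (fun k => by positivity) (fun k => ?_)
    ((hb (3 * r) (by positivity)).mul_left ((m : ℝ) + 1))
  -- `m + 2k ≤ (m + 1)(1 + 2k) ≤ (m + 1) 3^k` by Bernoulli's inequality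
  have hbern : 1 + (k : ℝ) * 2 ≤ 3 ^ k := by
    have := one_add_mul_le_pow (a := (2 : ℝ)) (by norm_num) k
    norm_num at this ⊢
    linarith
  have hcoeff : (m : ℝ) + 2 * k ≤ (m + 1) * 3 ^ k := by nlinarith
  rw [_root_.eulerCoeff, abs_mul, abs_of_nonneg (by positivity), mul_pow]
  have := mul_le_mul_of_nonneg_right hcoeff (by positivity : 0 ≤ |b k| * r ^ k)
  linarith

theorem summable_twoStepSeries (hb : HasInfiniteRadius b) (m : ℕ) (x : ℝ) :
    Summable fun k => b k * x ^ (m + 2 * k) :=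
  ((hb.summable_mul_pow (x ^ 2)).mul_left (x ^ m)).congr fun k => by ring

end HasInfiniteRadius

section twoStepSeries

variable {b : ℕ → ℝ} {m : ℕ}

theorem hasDerivAt_twoStepSeries (hb : HasInfiniteRadius b) (x : ℝ) :
    HasDerivAt (twoStepSeries m b) (∑' k, eulerCoeff m b k * x ^ (m + 2 * k - 1)) x := by
  set R := |x| + 1
  have hR : 1 ≤ R := by simp [R]
  have hterm (k : ℕ) (y : ℝ) : HasDerivAt (fun z => b k * z ^ (m + 2 * k))
      (eulerCoeff m b k * y ^ (m + 2 * k - 1)) y := by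
    refine ((hasDerivAt_pow (m + 2 * k) y).const_mul (b k)).congr_deriv ?_
    rw [eulerCoeff]; push_cast; ac_rfl
  have hbound (k : ℕ) (y : ℝ) (hy : y ∈ Metric.ball 0 R) :
      ‖eulerCoeff m b k * y ^ (m + 2 * k - 1)‖ ≤ |eulerCoeff m b k| * (R ^ 2) ^ k * R ^ m := by
    have hyR : |y| ≤ R := by simpa using (Metric.mem_ball.1 hy).le
    calc ‖eulerCoeff m b k * y ^ (m + 2 * k - 1)‖
        = |eulerCoeff m b k| * |y| ^ (m + 2 * k - 1) := by simp
      _ ≤ |eulerCoeff m b k| * R ^ (m + 2 * k) := by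
        gcongr
        exact (pow_le_pow_left₀ (abs_nonneg y) hyR _).trans (pow_le_pow_right₀ hR (by omega))
      _ = |eulerCoeff m b k| * (R ^ 2) ^ k * R ^ m := by rw [pow_add, pow_mul]; ring
  exact hasDerivAt_tsum_of_isPreconnected
    (((hb.eulerCoeff m) (R ^ 2) (by positivity)).mul_right (R ^ m)) Metric.isOpen_ball
    (convex_ball 0 R).isPreconnected (fun k y _ => hterm k y) hbound
    (Metric.mem_ball_self (by positivity)) (hb.summable_twoStepSeries m 0) (by simp [R])

theorem continuous_twoStepSeries (hb : HasInfiniteRadius b) : Continuous (twoStepSeries m b) :=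
  continuous_iff_continuousAt.2 fun x => (hasDerivAt_twoStepSeries hb x).continuousAt

theorem hasDerivAt_twoStepSeries_of_ne_zero (hb : HasInfiniteRadius b) {x : ℝ} (hx : x ≠ 0) :
    HasDerivAt (twoStepSeries m b) (twoStepSeries m (eulerCoeff m b) x / x) x := by
  convert hasDerivAt_twoStepSeries hb x using 1
  rw [div_eq_iff hx, twoStepSeries, mul_comm, ← tsum_mul_left]
  refine tsum_congr fun k => ?_
  rcases Nat.eq_zero_or_pos (m + 2 * k) with h | h
  · have hm : (m : ℝ) + 2 * k = 0 := by exact_mod_cast h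
    simp [eulerCoeff, hm]
  · rw [mul_left_comm, ← pow_succ', Nat.sub_add_cancel h]

theorem twoStepSeries_zero : twoStepSeries m b 0 = b 0 * 0 ^ m := by
  rw [twoStepSeries, tsum_eq_single 0 fun k hk => by simp [hk]]
  simp

end twoStepSeries

noncomputable def besselCoeff (m k : ℕ) : ℝ := (-1) ^ k / (k ! * (m + k)! * 2 ^ (m + 2 * k))

theorem hasInfiniteRadius_besselCoeff (m : ℕ) : HasInfiniteRadius (besselCoeff m) := by
  intro r hr
  refine .of_nonneg_of_le (fun k => by positivity) (fun k => ?_)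
    (Real.summable_pow_div_factorial (r / 4))
  have h4 : (4 : ℝ) ^ k ≤ (m + k)! * 2 ^ (m + 2 * k) := by
    have : (4 : ℝ) ^ k ≤ 2 ^ (m + 2 * k) := by
      rw [show (4 : ℝ) = 2 ^ 2 by norm_num, ← pow_mul]
      exact pow_le_pow_right₀ one_le_two (by omega)
    nlinarith [(Nat.one_le_cast (α := ℝ)).2 (Nat.factorial_pos (m + k)),
      pow_pos (two_pos : (0 : ℝ) < 2) (m + 2 * k)]
  rw [besselCoeff, abs_div, abs_pow, abs_neg, abs_one, one_pow, abs_of_pos (by positivity), div_pow,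
    div_div, one_div_mul_eq_div, div_le_div_iff₀ (by positivity) (by positivity),
    mul_assoc (k ! : ℝ), mul_comm (4 ^ k : ℝ)]
  gcongr

theorem besselJ_natCast (m : ℕ) : besselJ m = twoStepSeries m (besselCoeff m) := by
  funext x
  refine tsum_congr fun k => ?_
  rw [show (m : ℝ) + k + 1 = ((m + k : ℕ) : ℝ) + 1 by push_cast; ring, Real.Gamma_nat_eq_factorial,
    show 2 * (k : ℝ) + m = ((m + 2 * k : ℕ) : ℝ) by push_cast; ring, Real.rpow_natCast, div_pow,
    besselCoeff]
  field_simp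

theorem continuous_besselJ_natCast (m : ℕ) : Continuous (besselJ m) := by
  rw [besselJ_natCast]
  exact continuous_twoStepSeries (hasInfiniteRadius_besselCoeff m)

theorem besselCoeff_succ (m k : ℕ) :
    (((m : ℝ) + 2 * (k + 1)) ^ 2 - m ^ 2) * besselCoeff m (k + 1) = -besselCoeff m k := by
  rw [besselCoeff, besselCoeff, Nat.factorial_succ, ← add_assoc, Nat.factorial_succ,
    show m + 2 * (k + 1) = m + 2 * k + 2 by ring, pow_add]
  push_cast
  field_simp
  ring

theorem twoStepSeries_eulerCoeff_eulerCoeff_besselCoeff (m : ℕ) (x : ℝ) :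
    twoStepSeries m (eulerCoeff m (eulerCoeff m (besselCoeff m))) x =
      (m ^ 2 - x ^ 2) * twoStepSeries m (besselCoeff m) x := by
  have ha := hasInfiniteRadius_besselCoeff m
  have hsum := (ha.eulerCoeff m).eulerCoeff m |>.summable_twoStepSeries m x
  have hsum' := (ha.summable_twoStepSeries m x).mul_left ((m : ℝ) ^ 2)
  have hdiff : Summable fun k =>
      (((m : ℝ) + 2 * k) ^ 2 - m ^ 2) * besselCoeff m k * x ^ (m + 2 * k) :=
    (hsum.sub hsum').congr fun k => by simp only [eulerCoeff]; ring
  suffices twoStepSeries m (eulerCoeff m (eulerCoeff m (besselCoeff m))) x -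
      m ^ 2 * twoStepSeries m (besselCoeff m) x = -x ^ 2 * twoStepSeries m (besselCoeff m) x by
    linear_combination this
  calc _ = ∑' k, (((m : ℝ) + 2 * k) ^ 2 - m ^ 2) * besselCoeff m k * x ^ (m + 2 * k) := by
        rw [twoStepSeries, twoStepSeries, ← tsum_mul_left, ← hsum.tsum_sub hsum']
        exact tsum_congr fun k => by simp only [eulerCoeff]; ring
    _ = ∑' k, -x ^ 2 * (besselCoeff m k * x ^ (m + 2 * k)) := by
        rw [hdiff.tsum_eq_zero_add]
        simp only [CharP.cast_eq_zero, mul_zero, add_zero, sub_self, zero_mul, zero_add]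
        refine tsum_congr fun k => ?_
        push_cast
        rw [besselCoeff_succ, show m + 2 * (k + 1) = m + 2 * k + 2 by ring, pow_add]
        ring
    _ = _ := by rw [tsum_mul_left, twoStepSeries]

noncomputable def besselEnergy (m : ℕ) (y : ℝ) : ℝ :=
  twoStepSeries m (eulerCoeff m (besselCoeff m)) y ^ 2 +
    (y ^ 2 - m ^ 2) * twoStepSeries m (besselCoeff m) y ^ 2

theorem hasDerivAt_besselEnergy (m : ℕ) {y : ℝ} (hy : y ≠ 0) :
    HasDerivAt (besselEnergy m) (2 * y * twoStepSeries m (besselCoeff m) y ^ 2) y := by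
  have ha := hasInfiniteRadius_besselCoeff m
  have hJ := hasDerivAt_twoStepSeries_of_ne_zero (m := m) ha hy
  have hP := hasDerivAt_twoStepSeries_of_ne_zero (m := m) (ha.eulerCoeff m) hy
  have hE := (hP.pow 2).add (((hasDerivAt_pow 2 y).sub_const ((m : ℝ) ^ 2)).mul (hJ.pow 2))
  refine hE.congr_deriv ?_
  rw [twoStepSeries_eulerCoeff_eulerCoeff_besselCoeff, Pi.pow_apply]
  field_simp
  ring

theorem continuous_besselEnergy (m : ℕ) : Continuous (besselEnergy m) := by
  have ha := hasInfiniteRadius_besselCoeff m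
  unfold besselEnergy
  have := continuous_twoStepSeries ha (m := m)
  have := continuous_twoStepSeries (ha.eulerCoeff m) (m := m)
  fun_prop

theorem besselEnergy_zero (m : ℕ) : besselEnergy m 0 = 0 := by
  rcases Nat.eq_zero_or_pos m with rfl | hm
  · simp [besselEnergy, twoStepSeries_zero, eulerCoeff]
  · simp [besselEnergy, twoStepSeries_zero, hm.ne']

theorem integral_besselJ_sq_mul (m : ℕ) {k x : ℝ} (hk : 0 < k) (hx : 0 ≤ x) :
    ∫ r in (0 : ℝ)..x, besselJ m (k * r) ^ 2 * r = besselEnergy m (k * x) / (2 * k ^ 2) := by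
  have hcont : Continuous fun r => besselEnergy m (k * r) / (2 * k ^ 2) := by
    have := continuous_besselEnergy m
    fun_prop
  have hderiv (r : ℝ) (hr : r ∈ Ioo 0 x) :
      HasDerivAt (fun r => besselEnergy m (k * r) / (2 * k ^ 2)) (besselJ m (k * r) ^ 2 * r) r := by
    have hkr : k * r ≠ 0 := (mul_pos hk hr.1).ne'
    refine (((hasDerivAt_besselEnergy m hkr).comp r
      ((hasDerivAt_id r).const_mul k)).div_const _).congr_deriv ?_
    rw [besselJ_natCast]
    field_simp
  have hint : Continuous fun r => besselJ m (k * r) ^ 2 * r := by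
    have := continuous_besselJ_natCast m
    fun_prop
  rw [intervalIntegral.integral_eq_sub_of_hasDerivAt_of_le hx hcont.continuousOn hderiv
    (hint.intervalIntegrable _ _)]
  simp [besselEnergy_zero]

theorem antitoneOn_besselEnergy_div (m : ℕ) :
    AntitoneOn (fun y => besselEnergy m y / (y ^ 2 - m ^ 2)) (Ioi (m : ℝ)) := by
  have hpos {y : ℝ} (hy : y ∈ Ioi (m : ℝ)) : 0 < y ^ 2 - m ^ 2 := by
    have : (0 : ℝ) ≤ m := m.cast_nonneg
    simp only [mem_Ioi] at hy
    nlinarith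
  have hderiv {y : ℝ} (hy : y ∈ Ioi (m : ℝ)) :
      HasDerivAt (fun y => besselEnergy m y / (y ^ 2 - m ^ 2))
        (-(2 * y * twoStepSeries m (eulerCoeff m (besselCoeff m)) y ^ 2) / (y ^ 2 - m ^ 2) ^ 2)
        y := by
    refine ((hasDerivAt_besselEnergy m (lt_of_le_of_lt m.cast_nonneg hy).ne').div
      ((hasDerivAt_pow 2 y).sub_const ((m : ℝ) ^ 2)) (hpos hy).ne').congr_deriv ?_
    simp only [besselEnergy, Nat.cast_ofNat]
    ring
  refine antitoneOn_of_hasDerivWithinAt_nonpos (convex_Ioi _)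
    (fun y hy => (hderiv hy).continuousAt.continuousWithinAt)
    (fun y hy => (hderiv (by simpa using hy)).hasDerivWithinAt) (fun y hy => ?_)
  have hy0 : 0 < y := lt_of_le_of_lt m.cast_nonneg (by simpa using hy)
  exact div_nonpos_of_nonpos_of_nonneg (neg_nonpos.2 (by positivity)) (sq_nonneg _)

theorem exists_besselJ_pos (m : ℕ) : ∃ δ > 0, ∀ y ∈ Ioo 0 δ, 0 < besselJ m y := by
  have ha := hasInfiniteRadius_besselCoeff m
  have hg0 : 0 < twoStepSeries 0 (besselCoeff m) 0 := by
    rw [twoStepSeries_zero, besselCoeff]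
    positivity
  obtain ⟨δ, hδ, hg⟩ := Metric.eventually_nhds_iff.1
    (continuousAt_const.eventually_lt (continuous_twoStepSeries (m := 0) ha).continuousAt hg0)
  refine ⟨δ, hδ, fun y hy => ?_⟩
  have hJ : besselJ m y = y ^ m * twoStepSeries 0 (besselCoeff m) y := by
    rw [besselJ_natCast, twoStepSeries, twoStepSeries, ← tsum_mul_left]
    exact tsum_congr fun k => by ring
  rw [hJ]
  exact mul_pos (pow_pos hy.1 m) (hg (by simpa [abs_of_pos hy.1] using hy.2))

theorem integral_besselJ_sq_mul_mono (m : ℕ) (k : ℝ) {x y : ℝ} (hx : 0 ≤ x) (hxy : x ≤ y) :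
    ∫ r in (0 : ℝ)..x, besselJ m (k * r) ^ 2 * r ≤
      ∫ r in (0 : ℝ)..y, besselJ m (k * r) ^ 2 * r := by
  have := continuous_besselJ_natCast m
  refine intervalIntegral.integral_mono_interval le_rfl hx hxy
    ((ae_restrict_iff' measurableSet_Ioc).2 (ae_of_all _ fun r hr => ?_))
    (Continuous.intervalIntegrable (by fun_prop) _ _)
  exact mul_nonneg (sq_nonneg _) hr.1.le

theorem integral_besselJ_sq_mul_pos (m : ℕ) {k : ℝ} (hk : 0 < k) :
    0 < ∫ r in (0 : ℝ)..1, besselJ m (k * r) ^ 2 * r := by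
  obtain ⟨δ, hδ, hJ⟩ := exists_besselJ_pos m
  have hε : 0 < min 1 (δ / k) := lt_min one_pos (div_pos hδ hk)
  have := continuous_besselJ_natCast m
  refine lt_of_lt_of_le (intervalIntegral.intervalIntegral_pos_of_pos_on
    (Continuous.intervalIntegrable (by fun_prop) _ _) (fun r hr => ?_) hε)
    (integral_besselJ_sq_mul_mono m k hε.le (min_le_left _ _))
  have hkr : k * r < δ := (lt_div_iff₀' hk).1 (hr.2.trans_le (min_le_right _ _))
  exact mul_pos (pow_pos (hJ _ ⟨mul_pos hk hr.1, hkr⟩) 2) hr.1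

noncomputable def besselMassRatio (m : ℕ) (k τ : ℝ) : ℝ :=
  (∫ r in (0 : ℝ)..τ, besselJ m (k * r) ^ 2 * r) / ∫ r in (0 : ℝ)..1, besselJ m (k * r) ^ 2 * r

theorem besselMassRatio_le_one (m : ℕ) (k : ℝ) {τ : ℝ} (hτ0 : 0 ≤ τ) (hτ1 : τ ≤ 1) :
    besselMassRatio m k τ ≤ 1 :=
  div_le_one_of_le₀ (integral_besselJ_sq_mul_mono m k hτ0 hτ1)
    ((integral_besselJ_sq_mul_mono m k le_rfl zero_le_one).trans_eq' (by simp))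

theorem le_besselMassRatio {m : ℕ} {k τ : ℝ} (hk : 0 < k) (hτ1 : τ ≤ 1) (hturn : m < k * τ) :
    ((k * τ) ^ 2 - m ^ 2) / (k ^ 2 - m ^ 2) ≤ besselMassRatio m k τ := by
  have hm : (0 : ℝ) ≤ m := m.cast_nonneg
  have hkτ : k * τ ≤ k := mul_le_of_le_one_right hk.le hτ1
  have hτ0 : 0 ≤ τ := (pos_of_mul_pos_right (hm.trans_lt hturn) hk.le).le
  have hB := integral_besselJ_sq_mul_pos m hk
  rw [integral_besselJ_sq_mul m hk zero_le_one, mul_one] at hB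
  have hE : 0 < besselEnergy m k := (div_pos_iff_of_pos_right (by positivity)).1 hB
  have hd1 : 0 < (k * τ) ^ 2 - m ^ 2 := by nlinarith
  have hd2 : 0 < k ^ 2 - m ^ 2 := by nlinarith
  have hmono := antitoneOn_besselEnergy_div m (mem_Ioi.2 hturn) (mem_Ioi.2 (hturn.trans_le hkτ)) hkτ
  rw [div_le_div_iff₀ hd2 hd1] at hmono
  rw [besselMassRatio, integral_besselJ_sq_mul m hk hτ0, integral_besselJ_sq_mul m hk zero_le_one,
    mul_one, div_div_div_cancel_right₀ (by positivity), div_le_div_iff₀ hd2 hE]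
  linarith

theorem tendsto_turningPoint_ratio {k : ℕ → ℝ} {a : ℝ} (τ : ℝ)
    (hlim : Tendsto (fun m : ℕ => k m / m) atTop (nhds a)) (ha : a ^ 2 - 1 ≠ 0) :
    Tendsto (fun m : ℕ => ((k m * τ) ^ 2 - m ^ 2) / (k m ^ 2 - m ^ 2)) atTop
      (nhds (((a * τ) ^ 2 - 1) / (a ^ 2 - 1))) := by
  refine ((((hlim.mul_const τ).pow 2).sub_const 1).div ((hlim.pow 2).sub_const 1) ha).congr'
    ((eventually_ne_atTop 0).mono fun m hm => ?_)
  have hm : (m : ℝ) ≠ 0 := Nat.cast_ne_zero.2 hm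
  simp only [Pi.div_apply]
  field_simp

/-- A Bessel mode whose wavenumber exceeds the turning point (`k_m/m → a > 1`) keeps a
positive fraction of its `L²` mass in the disk of radius `τ` for any `τ ∈ (1/a, 1)`. -/
theorem stmt18 (a : ℝ) (ha : 1 < a) (k : ℕ → ℝ) (hk : ∀ m, 0 < k m)
    (hlim : Filter.Tendsto (fun m : ℕ => k m / (m:ℝ)) Filter.atTop (nhds a))
    (τ : ℝ) (hτ1 : 1/a < τ) (hτ2 : τ < 1) :
    0 < Filter.liminf (fun m : ℕ =>
        (∫ r in (0:ℝ)..τ, (besselJ m (k m * r)) ^ 2 * r) /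
        (∫ r in (0:ℝ)..1, (besselJ m (k m * r)) ^ 2 * r)) Filter.atTop := by
  have haτ : 1 < a * τ := by rwa [div_lt_iff₀ (by linarith), mul_comm] at hτ1
  have hτ0 : 0 < τ := lt_trans (by positivity) hτ1
  have hlower := tendsto_turningPoint_ratio τ hlim (by nlinarith)
  have hturn : ∀ᶠ m : ℕ in atTop, (m : ℝ) < k m * τ := by
    have h1τa : 1 / τ < a := (div_lt_iff₀ hτ0).2 (by linarith)
    filter_upwards [hlim.eventually (lt_mem_nhds h1τa), eventually_gt_atTop 0] with m hm hm0
    rwa [div_lt_div_iff₀ hτ0 (Nat.cast_pos.2 hm0), one_mul] at hm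
  calc (0 : ℝ) < ((a * τ) ^ 2 - 1) / (a ^ 2 - 1) := div_pos (by nlinarith) (by nlinarith)
    _ = liminf (fun m : ℕ => ((k m * τ) ^ 2 - m ^ 2) / (k m ^ 2 - m ^ 2)) atTop :=
        hlower.liminf_eq.symm
    _ ≤ liminf (fun m => besselMassRatio m (k m) τ) atTop :=
        liminf_le_liminf (hturn.mono fun m hm => le_besselMassRatio (hk m) hτ2.le hm)
          hlower.isBoundedUnder_ge (isCoboundedUnder_ge_of_le _ fun m =>
            besselMassRatio_le_one m (k m) hτ0.le hτ2.le)
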